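/- arXiv:2104.00049 — 7 statements merged into one kernel-verified Lean document; each statement's English description precedes it below -/
import Mathlib

section
/- Let n ≥ 2, let F₀, F₁ : ℝⁿ → ℝ be smooth, and let ξ⁰ : ℝⁿ → ℝⁿ be a smooth vector field satisfying the exact symmetry condition ∑_{i=1}^{n} ξ⁰ᵢ(x) ∂F₀/∂xᵢ(x) = 0 for all x ∈ ℝⁿ. Let I ⊆ ℝ be an open interval containing 0 and suppose that ∂F₀/∂x₁(x) + ε ∂F₁/∂x₁(x) ≠ 0 for all x ∈ ℝⁿ and all ε ∈ I. Then there exists a map η : I × ℝⁿ → ℝⁿ, smooth in its second argument for each ε ∈ I, such that η(0, x) = ξ⁰(x) for all x, and for every ε ∈ I and every x ∈ ℝⁿ one has ∑_{i=1}^{n} ηᵢ(ε, x) (∂F₀/∂xᵢ(x) + ε ∂F₁/∂xᵢ(x)) = 0. -/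
/-- The partial derivative of `F : ℝⁿ → ℝ` in the `i`-th coordinate direction. -/
noncomputable def pd {n : ℕ} (F : (Fin n → ℝ) → ℝ) (i : Fin n) (x : Fin n → ℝ) : ℝ :=
  fderiv ℝ F x (Pi.single i 1)

theorem pd_contDiff {n : ℕ} {F : (Fin n → ℝ) → ℝ} (hF : ContDiff ℝ (⊤ : ℕ∞) F) (i : Fin n) :
    ContDiff ℝ (⊤ : ℕ∞) (pd F i) := by
  have h : ContDiff ℝ (⊤ : ℕ∞) (fderiv ℝ F) := hF.fderiv_right (by simp)
  exact h.clm_apply contDiff_const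

/-- Every exact point symmetry of the unperturbed algebraic equation `F₀ = const`
extends to an exact point symmetry of the perturbed equation `F₀ + ε F₁ = const`
which reduces to the original generator at `ε = 0`. -/
theorem exact_symmetry_of_perturbed_algebraic_equation
    (n : ℕ) (hn : 2 ≤ n)
    (F₀ F₁ : (Fin n → ℝ) → ℝ)
    (hF₀ : ContDiff ℝ (⊤ : ℕ∞) F₀) (hF₁ : ContDiff ℝ (⊤ : ℕ∞) F₁)
    (ξ : (Fin n → ℝ) → (Fin n → ℝ)) (hξ : ContDiff ℝ (⊤ : ℕ∞) ξ)
    (hsym : ∀ x : Fin n → ℝ, ∑ i, ξ x i * pd F₀ i x = 0)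
    (a b : ℝ) (ha : a < 0) (hb : 0 < b)
    (hne : ∀ ε ∈ Set.Ioo a b, ∀ x : Fin n → ℝ,
      pd F₀ ⟨0, by omega⟩ x + ε * pd F₁ ⟨0, by omega⟩ x ≠ 0) :
    ∃ η : ℝ → (Fin n → ℝ) → (Fin n → ℝ),
      (∀ ε ∈ Set.Ioo a b, ContDiff ℝ (⊤ : ℕ∞) (η ε)) ∧
      (∀ x : Fin n → ℝ, η 0 x = ξ x) ∧
      (∀ ε ∈ Set.Ioo a b, ∀ x : Fin n → ℝ,
        ∑ i, η ε x i * (pd F₀ i x + ε * pd F₁ i x) = 0) := by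
  set i₀ : Fin n := ⟨0, by omega⟩ with hi₀
  set D : ℝ → (Fin n → ℝ) → Fin n → ℝ :=
    fun ε x i => pd F₀ i x + ε * pd F₁ i x with hD
  have h0mem : (0 : ℝ) ∈ Set.Ioo a b := ⟨ha, hb⟩
  refine ⟨fun ε x => Function.update (ξ x) i₀
      (-(∑ i ∈ Finset.univ.erase i₀, ξ x i * D ε x i) / D ε x i₀), ?_, ?_, ?_⟩
  · intro ε hε
    rw [contDiff_pi]
    intro j
    by_cases hj : j = i₀
    · subst hj
      simp only [Function.update_self]
      have hDsm : ∀ i : Fin n, ContDiff ℝ (⊤ : ℕ∞) (fun x => D ε x i) := fun i =>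
        (pd_contDiff hF₀ i).add (contDiff_const.mul (pd_contDiff hF₁ i))
      refine ContDiff.div ?_ (hDsm i₀) (fun x => hne ε hε x)
      refine ContDiff.neg ?_
      exact ContDiff.sum fun i _ => (contDiff_pi.mp hξ i).mul (hDsm i)
    · have : (fun x => Function.update (ξ x) i₀
          (-(∑ i ∈ Finset.univ.erase i₀, ξ x i * D ε x i) / D ε x i₀) j)
          = fun x => ξ x j := by
        funext x; exact Function.update_of_ne hj _ _
      rw [this]
      exact contDiff_pi.mp hξ j
  · intro x
    funext j
    by_cases hj : j = i₀
    · subst hj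
      simp only [Function.update_self]
      have hs := hsym x
      rw [← Finset.add_sum_erase _ _ (Finset.mem_univ i₀)] at hs
      have hD0 : D 0 x i₀ ≠ 0 := hne 0 h0mem x
      have : D 0 x i₀ = pd F₀ i₀ x := by simp [hD]
      rw [this] at hD0 ⊢
      have hrest : -(∑ i ∈ Finset.univ.erase i₀, ξ x i * D 0 x i)
          = ξ x i₀ * pd F₀ i₀ x := by
        simp only [hD, zero_mul, add_zero]
        linarith
      rw [hrest, mul_div_assoc, div_self hD0, mul_one]
    · exact Function.update_of_ne hj _ _
  · intro ε hε x
    have key : ∀ f : Fin n → ℝ, ∑ i, f i * D ε x i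
        = f i₀ * D ε x i₀ + ∑ i ∈ Finset.univ.erase i₀, f i * D ε x i :=
      fun f => (Finset.add_sum_erase _ _ (Finset.mem_univ i₀)).symm
    have hsum : ∑ i, Function.update (ξ x) i₀
        (-(∑ i ∈ Finset.univ.erase i₀, ξ x i * D ε x i) / D ε x i₀) i * D ε x i
        = (-(∑ i ∈ Finset.univ.erase i₀, ξ x i * D ε x i) / D ε x i₀) * D ε x i₀
          + ∑ i ∈ Finset.univ.erase i₀, ξ x i * D ε x i := by
      rw [key]
      simp only [Function.update_self]
      congr 1
      exact Finset.sum_congr rfl fun i hi => by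
        rw [Function.update_of_ne (Finset.ne_of_mem_erase hi)]
    show ∑ i, Function.update (ξ x) i₀
        (-(∑ i ∈ Finset.univ.erase i₀, ξ x i * D ε x i) / D ε x i₀) i * D ε x i = 0
    rw [hsum, div_mul_cancel₀ _ (hne ε hε x)]
    ring
end

section
/- Let f₀, f₁, ξ⁰, ξ¹ : ℝ² → ℝ be smooth functions of (x, y), and define η⁰ := ξ⁰ f₀ and η¹ := ξ⁰ f₁ + ξ¹ f₀. Then for all (x, y) ∈ ℝ²: η¹_x + (η¹_y − ξ¹_x) f₀ − ξ¹_y f₀² − ξ¹ f₀_x − η¹ f₀_y = (ξ⁰_x − η⁰_y) f₁ + 2 ξ⁰_y f₀ f₁ + ξ⁰ f₁_x + η⁰ f₁_y. -/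
/-- Partial derivative with respect to the first variable. -/
noncomputable def px (f : ℝ → ℝ → ℝ) : ℝ → ℝ → ℝ := fun x y => deriv (fun t => f t y) x

/-- Partial derivative with respect to the second variable. -/
noncomputable def py (f : ℝ → ℝ → ℝ) : ℝ → ℝ → ℝ := fun x y => deriv (fun t => f x t) y

lemma diffx_of_contDiff {f : ℝ → ℝ → ℝ} (hf : ContDiff ℝ (⊤ : ℕ∞) (Function.uncurry f))
    (x y : ℝ) : DifferentiableAt ℝ (fun t => f t y) x := by
  have : DifferentiableAt ℝ (Function.uncurry f) (x, y) :=
    (hf.differentiable (by simp)) _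
  exact this.comp x ((differentiableAt_id.prodMk (differentiableAt_const y) : DifferentiableAt ℝ (fun t : ℝ => (t, y)) x))

lemma diffy_of_contDiff {f : ℝ → ℝ → ℝ} (hf : ContDiff ℝ (⊤ : ℕ∞) (Function.uncurry f))
    (x y : ℝ) : DifferentiableAt ℝ (fun t => f x t) y := by
  have : DifferentiableAt ℝ (Function.uncurry f) (x, y) :=
    (hf.differentiable (by simp)) _
  exact this.comp y (((differentiableAt_const x).prodMk differentiableAt_id : DifferentiableAt ℝ (fun t : ℝ => (x, t)) y))

lemma px_mul {a b : ℝ → ℝ → ℝ} (ha : ContDiff ℝ (⊤ : ℕ∞) (Function.uncurry a))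
    (hb : ContDiff ℝ (⊤ : ℕ∞) (Function.uncurry b)) (x y : ℝ) :
    px (fun x y => a x y * b x y) x y = px a x y * b x y + a x y * px b x y := by
  simpa [px] using deriv_fun_mul (diffx_of_contDiff ha x y) (diffx_of_contDiff hb x y)

lemma py_mul {a b : ℝ → ℝ → ℝ} (ha : ContDiff ℝ (⊤ : ℕ∞) (Function.uncurry a))
    (hb : ContDiff ℝ (⊤ : ℕ∞) (Function.uncurry b)) (x y : ℝ) :
    py (fun x y => a x y * b x y) x y = py a x y * b x y + a x y * py b x y := by
  simpa [py] using deriv_fun_mul (diffy_of_contDiff ha x y) (diffy_of_contDiff hb x y)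

lemma px_add_mul {a b c d : ℝ → ℝ → ℝ} (ha : ContDiff ℝ (⊤ : ℕ∞) (Function.uncurry a))
    (hb : ContDiff ℝ (⊤ : ℕ∞) (Function.uncurry b)) (hc : ContDiff ℝ (⊤ : ℕ∞) (Function.uncurry c))
    (hd : ContDiff ℝ (⊤ : ℕ∞) (Function.uncurry d)) (x y : ℝ) :
    px (fun x y => a x y * b x y + c x y * d x y) x y
      = px a x y * b x y + a x y * px b x y + (px c x y * d x y + c x y * px d x y) := by
  have h1 := (diffx_of_contDiff ha x y).mul (diffx_of_contDiff hb x y)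
  have h2 := (diffx_of_contDiff hc x y).mul (diffx_of_contDiff hd x y)
  have := deriv_fun_add (f := fun t => a t y * b t y) (g := fun t => c t y * d t y) h1 h2
  simp only [px] at *
  rw [this, deriv_fun_mul (diffx_of_contDiff ha x y) (diffx_of_contDiff hb x y),
    deriv_fun_mul (diffx_of_contDiff hc x y) (diffx_of_contDiff hd x y)]

lemma py_add_mul {a b c d : ℝ → ℝ → ℝ} (ha : ContDiff ℝ (⊤ : ℕ∞) (Function.uncurry a))
    (hb : ContDiff ℝ (⊤ : ℕ∞) (Function.uncurry b)) (hc : ContDiff ℝ (⊤ : ℕ∞) (Function.uncurry c))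
    (hd : ContDiff ℝ (⊤ : ℕ∞) (Function.uncurry d)) (x y : ℝ) :
    py (fun x y => a x y * b x y + c x y * d x y) x y
      = py a x y * b x y + a x y * py b x y + (py c x y * d x y + c x y * py d x y) := by
  have h1 := (diffy_of_contDiff ha x y).mul (diffy_of_contDiff hb x y)
  have h2 := (diffy_of_contDiff hc x y).mul (diffy_of_contDiff hd x y)
  have := deriv_fun_add (f := fun t => a x t * b x t) (g := fun t => c x t * d x t) h1 h2
  simp only [py] at *
  rw [this, deriv_fun_mul (diffy_of_contDiff ha x y) (diffy_of_contDiff hb x y),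
    deriv_fun_mul (diffy_of_contDiff hc x y) (diffy_of_contDiff hd x y)]

/-- For the exact symmetry `(ξ0, η0)` with `η0 = ξ0 f₀` of `y' = f₀` and an arbitrary
smooth `ξ1`, the choice `η1 = ξ0 f₁ + ξ1 f₀` solves the BGI determining equation for
approximate point symmetries of the perturbed first-order ODE `y' = f₀ + ε f₁`. -/
theorem approximate_symmetry_components_of_first_order_ODE
    (f₀ f₁ ξ0 ξ1 : ℝ → ℝ → ℝ)
    (hf₀ : ContDiff ℝ (⊤ : ℕ∞) (Function.uncurry f₀))
    (hf₁ : ContDiff ℝ (⊤ : ℕ∞) (Function.uncurry f₁))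
    (hξ0 : ContDiff ℝ (⊤ : ℕ∞) (Function.uncurry ξ0))
    (hξ1 : ContDiff ℝ (⊤ : ℕ∞) (Function.uncurry ξ1))
    (η0 : ℝ → ℝ → ℝ) (hη0 : η0 = fun x y => ξ0 x y * f₀ x y)
    (η1 : ℝ → ℝ → ℝ) (hη1 : η1 = fun x y => ξ0 x y * f₁ x y + ξ1 x y * f₀ x y) :
    ∀ x y : ℝ,
      px η1 x y + (py η1 x y - px ξ1 x y) * f₀ x y - py ξ1 x y * (f₀ x y) ^ 2
        - ξ1 x y * px f₀ x y - η1 x y * py f₀ x y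
      = (px ξ0 x y - py η0 x y) * f₁ x y + 2 * py ξ0 x y * f₀ x y * f₁ x y
        + ξ0 x y * px f₁ x y + η0 x y * py f₁ x y := by
  subst hη0 hη1
  intro x y
  rw [px_add_mul hξ0 hf₁ hξ1 hf₀ x y, py_add_mul hξ0 hf₁ hξ1 hf₀ x y,
    py_mul hξ0 hf₀ x y]
  ring
end

section
/- Let C₆ ∈ ℝ and let ξ¹, η¹ : ℝ² → ℝ be smooth. Then ξ¹ and η¹ satisfy the system η¹_xx = 4 C₆, 2 η¹_xy − ξ¹_xx = 0, η¹_yy − 2 ξ¹_xy = 0, ξ¹_yy = 0 identically on ℝ² if and only if there exist constants a₁, …, a₈ ∈ ℝ such that ξ¹(x,y) = a₁ x² + (a₂/2) x y + a₃ x + a₄ y + a₅ and η¹(x,y) = 2 C₆ x² + a₁ x y + (a₂/2) y² + a₆ x + a₇ y + a₈. -/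
open Function
open scoped ContDiff

section Helpers

lemma hasDerivAt_quad (a b c t : ℝ) :
    HasDerivAt (fun t : ℝ => a * t ^ 2 + b * t + c) (2 * a * t + b) t := by
  have h1 : HasDerivAt (fun t : ℝ => t ^ 2) (2 * t) t := by
    simpa using hasDerivAt_pow 2 t
  have := ((h1.const_mul a).add ((hasDerivAt_id t).const_mul b)).add_const c
  exact this.congr_deriv (by ring)

lemma deriv_quad (a b c : ℝ) :
    deriv (fun t : ℝ => a * t ^ 2 + b * t + c) = fun t => 2 * a * t + b := by
  funext t; exact (hasDerivAt_quad a b c t).deriv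

lemma hasDerivAt_lin (b c t : ℝ) :
    HasDerivAt (fun t : ℝ => b * t + c) b t := by
  have := ((hasDerivAt_id t).const_mul b).add_const c
  simpa using this

lemma deriv_lin (b c : ℝ) :
    deriv (fun t : ℝ => b * t + c) = fun _ => b := by
  funext t; exact (hasDerivAt_lin b c t).deriv

lemma antideriv_lin {f : ℝ → ℝ} (hf : Differentiable ℝ f) (b c : ℝ)
    (h : ∀ x, deriv f x = b + c * x) :
    ∀ x, f x = f 0 + b * x + c / 2 * x ^ 2 := by
  intro x
  have key : ∀ t, f t - (c/2 * t ^ 2 + b * t + f 0) = f 0 - (c/2*0^2 + b*0 + f 0) := by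
    intro t
    apply is_const_of_deriv_eq_zero (f := fun t => f t - (c/2 * t ^ 2 + b * t + f 0))
    · exact hf.sub (by fun_prop)
    · intro x
      rw [deriv_fun_sub (hf x) ((hasDerivAt_quad (c/2) b (f 0) x).differentiableAt),
        (hasDerivAt_quad (c/2) b (f 0) x).deriv, h x]
      ring
  nlinarith [key x]

lemma antideriv_const {f : ℝ → ℝ} (hf : Differentiable ℝ f) (b : ℝ)
    (h : ∀ x, deriv f x = b) : ∀ x, f x = f 0 + b * x := by
  intro x
  have := antideriv_lin hf b 0 (by intro x; rw [h]; ring) x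
  linarith

lemma hasDerivAt_slice1 {f : ℝ → ℝ → ℝ} (hf : ContDiff ℝ ∞ (uncurry f)) (x y : ℝ) :
    HasDerivAt (fun t => f t y) (fderiv ℝ (uncurry f) (x, y) (1, 0)) x := by
  have h1 : HasDerivAt (fun t : ℝ => (t, y)) ((1 : ℝ), (0 : ℝ)) x :=
    (hasDerivAt_id x).prodMk (hasDerivAt_const x y)
  exact ((hf.differentiable (by norm_num) (x, y)).hasFDerivAt).comp_hasDerivAt x h1

lemma hasDerivAt_slice2 {f : ℝ → ℝ → ℝ} (hf : ContDiff ℝ ∞ (uncurry f)) (x y : ℝ) :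
    HasDerivAt (fun t => f x t) (fderiv ℝ (uncurry f) (x, y) (0, 1)) y := by
  have h1 : HasDerivAt (fun t : ℝ => (x, t)) ((0 : ℝ), (1 : ℝ)) y :=
    (hasDerivAt_const y x).prodMk (hasDerivAt_id y)
  exact ((hf.differentiable (by norm_num) (x, y)).hasFDerivAt).comp_hasDerivAt y h1

lemma px_eq {f : ℝ → ℝ → ℝ} (hf : ContDiff ℝ ∞ (uncurry f)) (x y : ℝ) :
    px f x y = fderiv ℝ (uncurry f) (x, y) (1, 0) :=
  (hasDerivAt_slice1 hf x y).deriv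

lemma py_eq {f : ℝ → ℝ → ℝ} (hf : ContDiff ℝ ∞ (uncurry f)) (x y : ℝ) :
    py f x y = fderiv ℝ (uncurry f) (x, y) (0, 1) :=
  (hasDerivAt_slice2 hf x y).deriv

lemma contDiff_px {f : ℝ → ℝ → ℝ} (hf : ContDiff ℝ ∞ (uncurry f)) :
    ContDiff ℝ ∞ (uncurry (px f)) := by
  have : uncurry (px f) = fun p : ℝ × ℝ => fderiv ℝ (uncurry f) p (1, 0) := by
    funext p; exact px_eq hf p.1 p.2
  rw [this]
  exact (hf.fderiv_right (by simp)).clm_apply contDiff_const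

lemma contDiff_py {f : ℝ → ℝ → ℝ} (hf : ContDiff ℝ ∞ (uncurry f)) :
    ContDiff ℝ ∞ (uncurry (py f)) := by
  have : uncurry (py f) = fun p : ℝ × ℝ => fderiv ℝ (uncurry f) p (0, 1) := by
    funext p; exact py_eq hf p.1 p.2
  rw [this]
  exact (hf.fderiv_right (by simp)).clm_apply contDiff_const

lemma contDiff_slice1 {f : ℝ → ℝ → ℝ} (hf : ContDiff ℝ ∞ (uncurry f)) (y : ℝ) :
    ContDiff ℝ ∞ (fun t => f t y) :=
  hf.comp (contDiff_id.prodMk contDiff_const)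

lemma contDiff_slice2 {f : ℝ → ℝ → ℝ} (hf : ContDiff ℝ ∞ (uncurry f)) (x : ℝ) :
    ContDiff ℝ ∞ (fun t => f x t) :=
  hf.comp (contDiff_const.prodMk contDiff_id)

lemma contDiff_deriv {g : ℝ → ℝ} (hg : ContDiff ℝ ∞ g) : ContDiff ℝ ∞ (deriv g) :=
  (contDiff_infty_iff_deriv.mp hg).2

lemma diff_of_contDiff {g : ℝ → ℝ} (hg : ContDiff ℝ ∞ g) : Differentiable ℝ g :=
  hg.differentiable (by norm_num)

end Helpers

/-- Complete solution of the split determining system for the first-order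
deformation components `(ξ¹, η¹)` of approximate point symmetries of
`y'' = ε (y')⁻¹`. -/
theorem deformation_components_for_ypp_eps_inv
    (C₆ : ℝ) (ξ1 η1 : ℝ → ℝ → ℝ)
    (hξ1 : ContDiff ℝ (⊤ : ℕ∞) (Function.uncurry ξ1))
    (hη1 : ContDiff ℝ (⊤ : ℕ∞) (Function.uncurry η1)) :
    (∀ x y : ℝ,
      px (px η1) x y = 4 * C₆ ∧
      2 * px (py η1) x y - px (px ξ1) x y = 0 ∧
      py (py η1) x y - 2 * px (py ξ1) x y = 0 ∧
      py (py ξ1) x y = 0)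
    ↔ ∃ a₁ a₂ a₃ a₄ a₅ a₆ a₇ a₈ : ℝ, ∀ x y : ℝ,
        ξ1 x y = a₁ * x ^ 2 + a₂ / 2 * x * y + a₃ * x + a₄ * y + a₅ ∧
        η1 x y = 2 * C₆ * x ^ 2 + a₁ * x * y + a₂ / 2 * y ^ 2 + a₆ * x + a₇ * y + a₈ := by
  have hξ : ContDiff ℝ ∞ (uncurry ξ1) := hξ1.of_le (by simp)
  have hη : ContDiff ℝ ∞ (uncurry η1) := hη1.of_le (by simp)
  constructor
  · -- forward direction
    intro h
    have e1 : ∀ x y, px (px η1) x y = 4 * C₆ := fun x y => (h x y).1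
    have e2 : ∀ x y, 2 * px (py η1) x y - px (px ξ1) x y = 0 := fun x y => (h x y).2.1
    have e3 : ∀ x y, py (py η1) x y - 2 * px (py ξ1) x y = 0 := fun x y => (h x y).2.2.1
    have e4 : ∀ x y, py (py ξ1) x y = 0 := fun x y => (h x y).2.2.2
    -- structure of ξ1 in the y direction
    have hpyξ : ∀ x y, py ξ1 x y = py ξ1 x 0 := by
      intro x y
      have hu : ContDiff ℝ ∞ (deriv (fun t => ξ1 x t)) :=
        contDiff_deriv (contDiff_slice2 hξ x)
      have h4 : ∀ t, deriv (deriv (fun s => ξ1 x s)) t = 0 := fun t => e4 x t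
      have := antideriv_const (diff_of_contDiff hu) 0 h4 y
      show deriv (fun s => ξ1 x s) y = deriv (fun s => ξ1 x s) 0
      simpa using this
    have hξform : ∀ x y, ξ1 x y = ξ1 x 0 + py ξ1 x 0 * y := by
      intro x y
      have hu : ContDiff ℝ ∞ (fun t => ξ1 x t) := contDiff_slice2 hξ x
      have hd : ∀ t, deriv (fun s => ξ1 x s) t = py ξ1 x 0 := fun t => hpyξ x t
      exact antideriv_const (diff_of_contDiff hu) (py ξ1 x 0) hd y
    -- smoothness of auxiliary 1D functions
    have hA : ContDiff ℝ ∞ (fun t => ξ1 t 0) := contDiff_slice1 hξ 0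
    have hB : ContDiff ℝ ∞ (fun t => py ξ1 t 0) := contDiff_slice1 (contDiff_py hξ) 0
    have hA' : ContDiff ℝ ∞ (deriv (fun t => ξ1 t 0)) := contDiff_deriv hA
    have hB' : ContDiff ℝ ∞ (deriv (fun t => py ξ1 t 0)) := contDiff_deriv hB
    -- px ξ1
    have hpxξ : ∀ x y, px ξ1 x y =
        deriv (fun t => ξ1 t 0) x + deriv (fun t => py ξ1 t 0) x * y := by
      intro x y
      have heq : (fun t => ξ1 t y) =
          fun t => ξ1 t 0 + py ξ1 t 0 * y := funext fun t => hξform t y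
      show deriv (fun t => ξ1 t y) x = _
      rw [heq]
      exact (((diff_of_contDiff hA x).hasDerivAt).add
        (((diff_of_contDiff hB x).hasDerivAt).mul_const y)).deriv
    have hpxpyξ : ∀ x y, px (py ξ1) x y = deriv (fun t => py ξ1 t 0) x := by
      intro x y
      have heq : (fun t => py ξ1 t y) = fun t => py ξ1 t 0 := funext fun t => hpyξ t y
      show deriv (fun t => py ξ1 t y) x = _
      rw [heq]
    have hpxpxξ : ∀ x y, px (px ξ1) x y =
        deriv (deriv (fun t => ξ1 t 0)) x + deriv (deriv (fun t => py ξ1 t 0)) x * y := by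
      intro x y
      have heq : (fun t => px ξ1 t y) =
          fun t => deriv (fun s => ξ1 s 0) t + deriv (fun s => py ξ1 s 0) t * y :=
        funext fun t => hpxξ t y
      show deriv (fun t => px ξ1 t y) x = _
      rw [heq]
      exact (((diff_of_contDiff hA' x).hasDerivAt).add
        (((diff_of_contDiff hB' x).hasDerivAt).mul_const y)).deriv
    -- structure of η1 in the x direction
    have hη0 : ContDiff ℝ ∞ (fun s => η1 0 s) := contDiff_slice2 hη 0
    have hg : ContDiff ℝ ∞ (fun s => px η1 0 s) := contDiff_slice2 (contDiff_px hη) 0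
    have hη0' : ContDiff ℝ ∞ (deriv (fun s => η1 0 s)) := contDiff_deriv hη0
    have hg' : ContDiff ℝ ∞ (deriv (fun s => px η1 0 s)) := contDiff_deriv hg
    have hpxη : ∀ x y, px η1 x y = px η1 0 y + 4 * C₆ * x := by
      intro x y
      have hv : ContDiff ℝ ∞ (deriv (fun t => η1 t y)) :=
        contDiff_deriv (contDiff_slice1 hη y)
      have h1 : ∀ t, deriv (deriv (fun s => η1 s y)) t = 4 * C₆ := fun t => e1 t y
      exact antideriv_const (diff_of_contDiff hv) (4 * C₆) h1 x
    have hηform : ∀ x y, η1 x y = η1 0 y + px η1 0 y * x + 2 * C₆ * x ^ 2 := by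
      intro x y
      have hv : ContDiff ℝ ∞ (fun t => η1 t y) := contDiff_slice1 hη y
      have hd : ∀ t, deriv (fun s => η1 s y) t = px η1 0 y + 4 * C₆ * t :=
        fun t => hpxη t y
      have := antideriv_lin (diff_of_contDiff hv) (px η1 0 y) (4 * C₆) hd x
      rw [this]; ring
    have hpyη : ∀ x y, py η1 x y =
        deriv (fun s => η1 0 s) y + deriv (fun s => px η1 0 s) y * x := by
      intro x y
      have heq : (fun t => η1 x t) =
          fun t => η1 0 t + px η1 0 t * x + 2 * C₆ * x ^ 2 := funext fun t => hηform x t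
      show deriv (fun t => η1 x t) y = _
      rw [heq]
      exact ((((diff_of_contDiff hη0 y).hasDerivAt).add
        (((diff_of_contDiff hg y).hasDerivAt).mul_const x)).add_const
        (2 * C₆ * x ^ 2)).deriv
    have hpxpyη : ∀ x y, px (py η1) x y = deriv (fun s => px η1 0 s) y := by
      intro x y
      have heq : (fun t => py η1 t y) =
          fun t => deriv (fun s => px η1 0 s) y * t + deriv (fun s => η1 0 s) y := by
        funext t; rw [hpyη t y]; ring
      show deriv (fun t => py η1 t y) x = _
      rw [heq, deriv_lin]
    have hpypyη : ∀ x y, py (py η1) x y =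
        deriv (deriv (fun s => η1 0 s)) y + deriv (deriv (fun s => px η1 0 s)) y * x := by
      intro x y
      have heq : (fun t => py η1 x t) =
          fun t => deriv (fun s => η1 0 s) t + deriv (fun s => px η1 0 s) t * x :=
        funext fun t => hpyη x t
      show deriv (fun t => py η1 x t) y = _
      rw [heq]
      exact (((diff_of_contDiff hη0' y).hasDerivAt).add
        (((diff_of_contDiff hg' y).hasDerivAt).mul_const x)).deriv
    -- the two remaining equations in terms of 1D derivatives
    have E2 : ∀ x y, 2 * deriv (fun s => px η1 0 s) y =
        deriv (deriv (fun t => ξ1 t 0)) x + deriv (deriv (fun t => py ξ1 t 0)) x * y := by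
      intro x y
      have := e2 x y
      rw [hpxpyη x y, hpxpxξ x y] at this
      linarith
    have E3 : ∀ x y, deriv (deriv (fun s => η1 0 s)) y +
        deriv (deriv (fun s => px η1 0 s)) y * x = 2 * deriv (fun t => py ξ1 t 0) x := by
      intro x y
      have := e3 x y
      rw [hpypyη x y, hpxpyξ x y] at this
      linarith
    -- extract constants
    set a₁ : ℝ := deriv (fun s => px η1 0 s) 0 with ha₁
    set b0 : ℝ := deriv (fun t => py ξ1 t 0) 0 with hb0
    have c1 : ∀ x, deriv (deriv (fun t => ξ1 t 0)) x = 2 * a₁ := by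
      intro x
      have := E2 x 0
      simpa using this.symm
    have c2 : ∀ x y, deriv (deriv (fun t => py ξ1 t 0)) x * y =
        2 * deriv (fun s => px η1 0 s) y - 2 * a₁ := by
      intro x y
      have h1 := E2 x y
      rw [c1 x] at h1
      linarith
    have c3 : ∀ y, deriv (deriv (fun s => η1 0 s)) y = 2 * b0 := by
      intro y
      have := E3 0 y
      simpa using this
    have c4 : ∀ x y, deriv (deriv (fun s => px η1 0 s)) y * x =
        2 * deriv (fun t => py ξ1 t 0) x - 2 * b0 := by
      intro x y
      have h1 := E3 x y
      rw [c3 y] at h1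
      linarith
    set k : ℝ := deriv (deriv (fun t => py ξ1 t 0)) 0 with hk
    set m : ℝ := deriv (deriv (fun s => px η1 0 s)) 0 with hm
    have c5 : ∀ y, deriv (fun s => px η1 0 s) y = a₁ + k / 2 * y := by
      intro y
      have := c2 0 y
      linarith
    have c6 : ∀ x, deriv (fun t => py ξ1 t 0) x = b0 + m / 2 * x := by
      intro x
      have := c4 x 0
      linarith
    have hgd : ∀ y, deriv (deriv (fun s => px η1 0 s)) y = k / 2 := by
      intro y
      have heq : deriv (fun s => px η1 0 s) = fun s => k / 2 * s + a₁ := by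
        funext s; rw [c5 s]; ring
      rw [heq, deriv_lin]
    have hBd : ∀ x, deriv (deriv (fun t => py ξ1 t 0)) x = m / 2 := by
      intro x
      have heq : deriv (fun t => py ξ1 t 0) = fun t => m / 2 * t + b0 := by
        funext t; rw [c6 t]; ring
      rw [heq, deriv_lin]
    have hk0 : k = 0 := by
      have h1 : m = k / 2 := (hgd 0).symm.trans hm.symm |>.symm
      have h2 : k = m / 2 := (hBd 0).symm.trans hk.symm |>.symm
      linarith
    have hm0 : m = 0 := by
      have h2 : k = m / 2 := (hBd 0).symm.trans hk.symm |>.symm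
      linarith
    -- final integration
    have hg_final : ∀ y, deriv (fun s => px η1 0 s) y = a₁ := by
      intro y; rw [c5 y, hk0]; ring
    have hB_final : ∀ x, deriv (fun t => py ξ1 t 0) x = b0 := by
      intro x; rw [c6 x, hm0]; ring
    have hBval : ∀ x, py ξ1 x 0 = py ξ1 0 0 + b0 * x :=
      antideriv_const (diff_of_contDiff hB) b0 hB_final
    have hA'val : ∀ x, deriv (fun t => ξ1 t 0) x = deriv (fun t => ξ1 t 0) 0 + 2 * a₁ * x :=
      antideriv_const (diff_of_contDiff hA') (2 * a₁) c1
    have hAval : ∀ x, ξ1 x 0 = ξ1 0 0 + deriv (fun t => ξ1 t 0) 0 * x + a₁ * x ^ 2 := by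
      intro x
      have := antideriv_lin (diff_of_contDiff hA) (deriv (fun t => ξ1 t 0) 0) (2 * a₁)
        (fun x => by rw [hA'val x]) x
      rw [this]; ring
    have hgval : ∀ y, px η1 0 y = px η1 0 0 + a₁ * y :=
      antideriv_const (diff_of_contDiff hg) a₁ hg_final
    have hH'val : ∀ y, deriv (fun s => η1 0 s) y = deriv (fun s => η1 0 s) 0 + 2 * b0 * y :=
      antideriv_const (diff_of_contDiff hη0') (2 * b0) c3
    have hHval : ∀ y, η1 0 y = η1 0 0 + deriv (fun s => η1 0 s) 0 * y + b0 * y ^ 2 := by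
      intro y
      have := antideriv_lin (diff_of_contDiff hη0) (deriv (fun s => η1 0 s) 0) (2 * b0)
        (fun y => by rw [hH'val y]) y
      rw [this]; ring
    refine ⟨a₁, 2 * b0, deriv (fun t => ξ1 t 0) 0, py ξ1 0 0, ξ1 0 0,
      px η1 0 0, deriv (fun s => η1 0 s) 0, η1 0 0, fun x y => ⟨?_, ?_⟩⟩
    · rw [hξform x y, hAval x, hBval x]; ring
    · rw [hηform x y, hHval y, hgval y]; ring
  · -- reverse direction
    rintro ⟨a₁, a₂, a₃, a₄, a₅, a₆, a₇, a₈, hfm⟩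
    have hξf : ∀ x y : ℝ, ξ1 x y = a₁ * x ^ 2 + a₂ / 2 * x * y + a₃ * x + a₄ * y + a₅ :=
      fun x y => (hfm x y).1
    have hηf : ∀ x y : ℝ, η1 x y =
        2 * C₆ * x ^ 2 + a₁ * x * y + a₂ / 2 * y ^ 2 + a₆ * x + a₇ * y + a₈ :=
      fun x y => (hfm x y).2
    have hpxξ : ∀ x y, px ξ1 x y = 2 * a₁ * x + (a₂ / 2 * y + a₃) := by
      intro x y
      have heq : (fun t => ξ1 t y) =
          fun t => a₁ * t ^ 2 + (a₂ / 2 * y + a₃) * t + (a₄ * y + a₅) := by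
        funext t; rw [hξf t y]; ring
      show deriv (fun t => ξ1 t y) x = _
      rw [heq, deriv_quad]
    have hpyξ : ∀ x y, py ξ1 x y = (a₂ / 2 * x + a₄) := by
      intro x y
      have heq : (fun t => ξ1 x t) =
          fun t => (a₂ / 2 * x + a₄) * t + (a₁ * x ^ 2 + a₃ * x + a₅) := by
        funext t; rw [hξf x t]; ring
      show deriv (fun t => ξ1 x t) y = _
      rw [heq, deriv_lin]
    have hpxη : ∀ x y, px η1 x y = 2 * (2 * C₆) * x + (a₁ * y + a₆) := by
      intro x y
      have heq : (fun t => η1 t y) =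
          fun t => (2 * C₆) * t ^ 2 + (a₁ * y + a₆) * t + (a₂ / 2 * y ^ 2 + a₇ * y + a₈) := by
        funext t; rw [hηf t y]; ring
      show deriv (fun t => η1 t y) x = _
      rw [heq, deriv_quad]
    have hpyη : ∀ x y, py η1 x y = 2 * (a₂ / 2) * y + (a₁ * x + a₇) := by
      intro x y
      have heq : (fun t => η1 x t) =
          fun t => (a₂ / 2) * t ^ 2 + (a₁ * x + a₇) * t + (2 * C₆ * x ^ 2 + a₆ * x + a₈) := by
        funext t; rw [hηf x t]; ring
      show deriv (fun t => η1 x t) y = _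
      rw [heq, deriv_quad]
    intro x y
    refine ⟨?_, ?_, ?_, ?_⟩
    · show deriv (fun t => px η1 t y) x = 4 * C₆
      have heq : (fun t => px η1 t y) = fun t => (4 * C₆) * t + (a₁ * y + a₆) := by
        funext t; rw [hpxη t y]; ring
      rw [heq, deriv_lin]
    · have h1 : px (py η1) x y = a₁ := by
        show deriv (fun t => py η1 t y) x = a₁
        have heq : (fun t => py η1 t y) = fun t => a₁ * t + (a₂ * y + a₇) := by
          funext t; rw [hpyη t y]; ring
        rw [heq, deriv_lin]
      have h2 : px (px ξ1) x y = 2 * a₁ := by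
        show deriv (fun t => px ξ1 t y) x = 2 * a₁
        have heq : (fun t => px ξ1 t y) = fun t => (2 * a₁) * t + (a₂ / 2 * y + a₃) := by
          funext t; rw [hpxξ t y]
        rw [heq, deriv_lin]
      rw [h1, h2]; ring
    · have h1 : py (py η1) x y = a₂ := by
        show deriv (fun t => py η1 x t) y = a₂
        have heq : (fun t => py η1 x t) = fun t => a₂ * t + (a₁ * x + a₇) := by
          funext t; rw [hpyη x t]; ring
        rw [heq, deriv_lin]
      have h2 : px (py ξ1) x y = a₂ / 2 := by
        show deriv (fun t => py ξ1 t y) x = a₂ / 2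
        have heq : (fun t => py ξ1 t y) = fun t => (a₂ / 2) * t + a₄ := by
          funext t; rw [hpyξ t y]
        rw [heq, deriv_lin]
      rw [h1, h2]; ring
    · show deriv (fun t => py ξ1 x t) y = 0
      have heq : (fun t => py ξ1 x t) = fun _ => a₂ / 2 * x + a₄ := by
        funext t; rw [hpyξ x t]
      rw [heq, deriv_const]
end

section
/- Let f₀, f₁, ξ⁰, η⁰, ξ¹, η¹ : ℝ² → ℝ be smooth functions of (x, y). Suppose: (i) η⁰_x + f₀ η⁰_y − η⁰ f₀_y − ξ⁰ f₀_x − f₀ ξ⁰_x − f₀² ξ⁰_y = 0 on ℝ²; (ii) η¹_x + (η¹_y − ξ¹_x) f₀ − ξ¹_y f₀² − ξ¹ f₀_x − η¹ f₀_y = (ξ⁰_x − η⁰_y) f₁ + 2 ξ⁰_y f₀ f₁ + ξ⁰ f₁_x + η⁰ f₁_y on ℝ²; and (iii) η⁰(x,y) − ξ⁰(x,y) f₀(x,y) ≠ 0 for all (x,y). Define μ₀ := 1/(η⁰ − ξ⁰ f₀) and μ₁ := μ₀² (ξ⁰ f₁ + ξ¹ f₀ − η¹). Then for all (x, y) ∈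 ℝ²: μ₀_x + (μ₀ f₀)_y = 0 and μ₁_x + (μ₁ f₀)_y + (μ₀ f₁)_y = 0. -/
lemma diffAt_x (f : ℝ → ℝ → ℝ) (hf : ContDiff ℝ (⊤ : ℕ∞) (Function.uncurry f)) (x y : ℝ) :
    DifferentiableAt ℝ (fun t => f t y) x := by
  have h := (hf.differentiable (by simp)).comp
    ((differentiable_id.prodMk (differentiable_const y)))
  exact h.differentiableAt

lemma diffAt_y (f : ℝ → ℝ → ℝ) (hf : ContDiff ℝ (⊤ : ℕ∞) (Function.uncurry f)) (x y : ℝ) :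
    DifferentiableAt ℝ (fun t => f x t) y := by
  have h := (hf.differentiable (by simp)).comp
    (((differentiable_const x).prodMk differentiable_id))
  exact h.differentiableAt

lemma combine1 (A B c e d : ℝ) (hd : d ≠ 0) :
    -A / d ^ 2 + (-B / d ^ 2 * c + 1 / d * e) = (-A - B * c + d * e) / d ^ 2 := by
  field_simp; ring

lemma combine2 (P Q n c e B g h d : ℝ) (hd : d ≠ 0) :
    P / (d ^ 2) ^ 2 + (Q / (d ^ 2) ^ 2 * c + n / d ^ 2 * e)
      + (-B / d ^ 2 * g + 1 / d * h)
    = (P + Q * c + d ^ 2 * n * e - d ^ 2 * B * g + d ^ 3 * h) / (d ^ 2) ^ 2 := by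
  field_simp; ring

/-- From a BGI approximate point symmetry `(ξ0 + ε ξ1, η0 + ε η1)` of the perturbed
first-order ODE `y' = f₀ + ε f₁`, the functions `μ₀ = 1/(η0 − ξ0 f₀)` and
`μ₁ = μ₀² (ξ0 f₁ + ξ1 f₀ − η1)` satisfy the determining equations for the components
of an approximate integrating factor. -/
theorem approximate_integrating_factor_from_approximate_symmetry
    (f₀ f₁ ξ0 η0 ξ1 η1 : ℝ → ℝ → ℝ)
    (hf₀ : ContDiff ℝ (⊤ : ℕ∞) (Function.uncurry f₀))
    (hf₁ : ContDiff ℝ (⊤ : ℕ∞) (Function.uncurry f₁))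
    (hξ0 : ContDiff ℝ (⊤ : ℕ∞) (Function.uncurry ξ0))
    (hη0 : ContDiff ℝ (⊤ : ℕ∞) (Function.uncurry η0))
    (hξ1 : ContDiff ℝ (⊤ : ℕ∞) (Function.uncurry ξ1))
    (hη1 : ContDiff ℝ (⊤ : ℕ∞) (Function.uncurry η1))
    (hdet0 : ∀ x y : ℝ,
      px η0 x y + f₀ x y * py η0 x y - η0 x y * py f₀ x y - ξ0 x y * px f₀ x y
        - f₀ x y * px ξ0 x y - (f₀ x y) ^ 2 * py ξ0 x y = 0)
    (hdet1 : ∀ x y : ℝ,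
      px η1 x y + (py η1 x y - px ξ1 x y) * f₀ x y - py ξ1 x y * (f₀ x y) ^ 2
        - ξ1 x y * px f₀ x y - η1 x y * py f₀ x y
      = (px ξ0 x y - py η0 x y) * f₁ x y + 2 * py ξ0 x y * f₀ x y * f₁ x y
        + ξ0 x y * px f₁ x y + η0 x y * py f₁ x y)
    (hne : ∀ x y : ℝ, η0 x y - ξ0 x y * f₀ x y ≠ 0)
    (μ₀ : ℝ → ℝ → ℝ) (hμ₀ : μ₀ = fun x y => 1 / (η0 x y - ξ0 x y * f₀ x y))
    (μ₁ : ℝ → ℝ → ℝ)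
    (hμ₁ : μ₁ = fun x y => (μ₀ x y) ^ 2 * (ξ0 x y * f₁ x y + ξ1 x y * f₀ x y - η1 x y)) :
    ∀ x y : ℝ,
      px μ₀ x y + py (fun a b => μ₀ a b * f₀ a b) x y = 0 ∧
      px μ₁ x y + py (fun a b => μ₁ a b * f₀ a b) x y
        + py (fun a b => μ₀ a b * f₁ a b) x y = 0 := by
  subst hμ₁ hμ₀
  intro x y
  -- differentiability of x-slices at x and y-slices at y
  have hf₀x := diffAt_x f₀ hf₀ x y
  have hf₁x := diffAt_x f₁ hf₁ x y
  have hξ0x := diffAt_x ξ0 hξ0 x y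
  have hη0x := diffAt_x η0 hη0 x y
  have hξ1x := diffAt_x ξ1 hξ1 x y
  have hη1x := diffAt_x η1 hη1 x y
  have hf₀y := diffAt_y f₀ hf₀ x y
  have hf₁y := diffAt_y f₁ hf₁ x y
  have hξ0y := diffAt_y ξ0 hξ0 x y
  have hη0y := diffAt_y η0 hη0 x y
  have hξ1y := diffAt_y ξ1 hξ1 x y
  have hη1y := diffAt_y η1 hη1 x y
  -- D = η0 - ξ0 f₀ and its slices
  have hDx : DifferentiableAt ℝ (fun t => η0 t y - ξ0 t y * f₀ t y) x :=
    hη0x.sub (hξ0x.mul hf₀x)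
  have hDy : DifferentiableAt ℝ (fun t => η0 x t - ξ0 x t * f₀ x t) y :=
    hη0y.sub (hξ0y.mul hf₀y)
  have hNx : DifferentiableAt ℝ
      (fun t => ξ0 t y * f₁ t y + ξ1 t y * f₀ t y - η1 t y) x :=
    ((hξ0x.mul hf₁x).add (hξ1x.mul hf₀x)).sub hη1x
  have hNy : DifferentiableAt ℝ
      (fun t => ξ0 x t * f₁ x t + ξ1 x t * f₀ x t - η1 x t) y :=
    ((hξ0y.mul hf₁y).add (hξ1y.mul hf₀y)).sub hη1y
  have hDne : η0 x y - ξ0 x y * f₀ x y ≠ 0 := hne x y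
  have hD2ne : (η0 x y - ξ0 x y * f₀ x y) ^ 2 ≠ 0 := pow_ne_zero _ hDne
  -- derivatives of D slices
  have dDx : deriv (fun t => η0 t y - ξ0 t y * f₀ t y) x
      = px η0 x y - (px ξ0 x y * f₀ x y + ξ0 x y * px f₀ x y) := by
    rw [deriv_fun_sub hη0x (hξ0x.fun_mul hf₀x), deriv_fun_mul hξ0x hf₀x]; rfl
  have dDy : deriv (fun t => η0 x t - ξ0 x t * f₀ x t) y
      = py η0 x y - (py ξ0 x y * f₀ x y + ξ0 x y * py f₀ x y) := by
    rw [deriv_fun_sub hη0y (hξ0y.fun_mul hf₀y), deriv_fun_mul hξ0y hf₀y]; rfl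
  -- derivatives of N slices
  have dNx : deriv (fun t => ξ0 t y * f₁ t y + ξ1 t y * f₀ t y - η1 t y) x
      = (px ξ0 x y * f₁ x y + ξ0 x y * px f₁ x y)
        + (px ξ1 x y * f₀ x y + ξ1 x y * px f₀ x y) - px η1 x y := by
    rw [deriv_fun_sub ((hξ0x.fun_mul hf₁x).fun_add (hξ1x.fun_mul hf₀x)) hη1x,
      deriv_fun_add (hξ0x.fun_mul hf₁x) (hξ1x.fun_mul hf₀x),
      deriv_fun_mul hξ0x hf₁x, deriv_fun_mul hξ1x hf₀x]; rfl
  have dNy : deriv (fun t => ξ0 x t * f₁ x t + ξ1 x t * f₀ x t - η1 x t) y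
      = (py ξ0 x y * f₁ x y + ξ0 x y * py f₁ x y)
        + (py ξ1 x y * f₀ x y + ξ1 x y * py f₀ x y) - py η1 x y := by
    rw [deriv_fun_sub ((hξ0y.fun_mul hf₁y).fun_add (hξ1y.fun_mul hf₀y)) hη1y,
      deriv_fun_add (hξ0y.fun_mul hf₁y) (hξ1y.fun_mul hf₀y),
      deriv_fun_mul hξ0y hf₁y, deriv_fun_mul hξ1y hf₀y]; rfl
  -- derivative of μ₀ slices
  have dμ₀x : px (fun x y => 1 / (η0 x y - ξ0 x y * f₀ x y)) x y
      = -(px η0 x y - (px ξ0 x y * f₀ x y + ξ0 x y * px f₀ x y))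
        / (η0 x y - ξ0 x y * f₀ x y) ^ 2 := by
    show deriv (fun t => 1 / (η0 t y - ξ0 t y * f₀ t y)) x = _
    simp only [one_div]
    rw [deriv_fun_inv'' hDx hDne, dDx]
  have dμ₀yslice : deriv (fun t => 1 / (η0 x t - ξ0 x t * f₀ x t)) y
      = -(py η0 x y - (py ξ0 x y * f₀ x y + ξ0 x y * py f₀ x y))
        / (η0 x y - ξ0 x y * f₀ x y) ^ 2 := by
    simp only [one_div]
    rw [deriv_fun_inv'' hDy hDne, dDy]
  constructor
  · -- first determining equation
    have dT : py (fun a b => (1 / (η0 a b - ξ0 a b * f₀ a b)) * f₀ a b) x y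
        = (-(py η0 x y - (py ξ0 x y * f₀ x y + ξ0 x y * py f₀ x y))
            / (η0 x y - ξ0 x y * f₀ x y) ^ 2) * f₀ x y
          + (1 / (η0 x y - ξ0 x y * f₀ x y)) * py f₀ x y := by
      show deriv (fun t => (1 / (η0 x t - ξ0 x t * f₀ x t)) * f₀ x t) y = _
      rw [deriv_fun_mul (by simpa only [one_div] using hDy.fun_inv hDne) hf₀y, dμ₀yslice]; rfl
    rw [dμ₀x, dT, combine1 _ _ _ _ _ hDne,
      show -(px η0 x y - (px ξ0 x y * f₀ x y + ξ0 x y * px f₀ x y))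
          - (py η0 x y - (py ξ0 x y * f₀ x y + ξ0 x y * py f₀ x y)) * f₀ x y
          + (η0 x y - ξ0 x y * f₀ x y) * py f₀ x y = 0 from by
        linear_combination -hdet0 x y,
      zero_div]
  · -- second determining equation
    have e1 : (fun t => (1 / (η0 t y - ξ0 t y * f₀ t y)) ^ 2
        * (ξ0 t y * f₁ t y + ξ1 t y * f₀ t y - η1 t y))
        = (fun t => (ξ0 t y * f₁ t y + ξ1 t y * f₀ t y - η1 t y)
          / (η0 t y - ξ0 t y * f₀ t y) ^ 2) := by
      funext t; simp only [one_div, inv_pow]; ring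
    have e2 : (fun t => ((1 / (η0 x t - ξ0 x t * f₀ x t)) ^ 2
        * (ξ0 x t * f₁ x t + ξ1 x t * f₀ x t - η1 x t)) * f₀ x t)
        = (fun t => ((ξ0 x t * f₁ x t + ξ1 x t * f₀ x t - η1 x t)
          / (η0 x t - ξ0 x t * f₀ x t) ^ 2) * f₀ x t) := by
      funext t; simp only [one_div, inv_pow]; ring
    have dD2x : deriv (fun t => (η0 t y - ξ0 t y * f₀ t y) ^ 2) x
        = 2 * (η0 x y - ξ0 x y * f₀ x y)
          * (px η0 x y - (px ξ0 x y * f₀ x y + ξ0 x y * px f₀ x y)) := by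
      rw [deriv_fun_pow hDx 2, dDx]; norm_num
    have dD2y : deriv (fun t => (η0 x t - ξ0 x t * f₀ x t) ^ 2) y
        = 2 * (η0 x y - ξ0 x y * f₀ x y)
          * (py η0 x y - (py ξ0 x y * f₀ x y + ξ0 x y * py f₀ x y)) := by
      rw [deriv_fun_pow hDy 2, dDy]; norm_num
    have dμ₁x : px (fun a b => (1 / (η0 a b - ξ0 a b * f₀ a b)) ^ 2
        * (ξ0 a b * f₁ a b + ξ1 a b * f₀ a b - η1 a b)) x y
        = (((px ξ0 x y * f₁ x y + ξ0 x y * px f₁ x y)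
            + (px ξ1 x y * f₀ x y + ξ1 x y * px f₀ x y) - px η1 x y)
            * (η0 x y - ξ0 x y * f₀ x y) ^ 2
          - (ξ0 x y * f₁ x y + ξ1 x y * f₀ x y - η1 x y)
            * (2 * (η0 x y - ξ0 x y * f₀ x y)
              * (px η0 x y - (px ξ0 x y * f₀ x y + ξ0 x y * px f₀ x y))))
          / ((η0 x y - ξ0 x y * f₀ x y) ^ 2) ^ 2 := by
      show deriv (fun t => (1 / (η0 t y - ξ0 t y * f₀ t y)) ^ 2
        * (ξ0 t y * f₁ t y + ξ1 t y * f₀ t y - η1 t y)) x = _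
      rw [e1, deriv_fun_div hNx (hDx.fun_pow 2) hD2ne, dNx, dD2x]
    have dμ₁f₀ : py (fun a b => ((1 / (η0 a b - ξ0 a b * f₀ a b)) ^ 2
        * (ξ0 a b * f₁ a b + ξ1 a b * f₀ a b - η1 a b)) * f₀ a b) x y
        = ((((py ξ0 x y * f₁ x y + ξ0 x y * py f₁ x y)
            + (py ξ1 x y * f₀ x y + ξ1 x y * py f₀ x y) - py η1 x y)
            * (η0 x y - ξ0 x y * f₀ x y) ^ 2
          - (ξ0 x y * f₁ x y + ξ1 x y * f₀ x y - η1 x y)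
            * (2 * (η0 x y - ξ0 x y * f₀ x y)
              * (py η0 x y - (py ξ0 x y * f₀ x y + ξ0 x y * py f₀ x y))))
          / ((η0 x y - ξ0 x y * f₀ x y) ^ 2) ^ 2) * f₀ x y
          + ((ξ0 x y * f₁ x y + ξ1 x y * f₀ x y - η1 x y)
            / (η0 x y - ξ0 x y * f₀ x y) ^ 2) * py f₀ x y := by
      show deriv (fun t => ((1 / (η0 x t - ξ0 x t * f₀ x t)) ^ 2
        * (ξ0 x t * f₁ x t + ξ1 x t * f₀ x t - η1 x t)) * f₀ x t) y = _
      rw [e2, deriv_fun_mul (hNy.fun_div (hDy.fun_pow 2) hD2ne) hf₀y,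
        deriv_fun_div hNy (hDy.fun_pow 2) hD2ne, dNy, dD2y]; rfl
    have dμ₀f₁ : py (fun a b => (1 / (η0 a b - ξ0 a b * f₀ a b)) * f₁ a b) x y
        = (-(py η0 x y - (py ξ0 x y * f₀ x y + ξ0 x y * py f₀ x y))
            / (η0 x y - ξ0 x y * f₀ x y) ^ 2) * f₁ x y
          + (1 / (η0 x y - ξ0 x y * f₀ x y)) * py f₁ x y := by
      show deriv (fun t => (1 / (η0 x t - ξ0 x t * f₀ x t)) * f₁ x t) y = _
      rw [deriv_fun_mul (by simpa only [one_div] using hDy.fun_inv hDne) hf₁y, dμ₀yslice]; rfl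
    rw [dμ₁x, dμ₁f₀, dμ₀f₁, combine2 _ _ _ _ _ _ _ _ _ hDne,
      show ((px ξ0 x y * f₁ x y + ξ0 x y * px f₁ x y)
            + (px ξ1 x y * f₀ x y + ξ1 x y * px f₀ x y) - px η1 x y)
            * (η0 x y - ξ0 x y * f₀ x y) ^ 2
          - (ξ0 x y * f₁ x y + ξ1 x y * f₀ x y - η1 x y)
            * (2 * (η0 x y - ξ0 x y * f₀ x y)
              * (px η0 x y - (px ξ0 x y * f₀ x y + ξ0 x y * px f₀ x y)))
          + (((py ξ0 x y * f₁ x y + ξ0 x y * py f₁ x y)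
            + (py ξ1 x y * f₀ x y + ξ1 x y * py f₀ x y) - py η1 x y)
            * (η0 x y - ξ0 x y * f₀ x y) ^ 2
          - (ξ0 x y * f₁ x y + ξ1 x y * f₀ x y - η1 x y)
            * (2 * (η0 x y - ξ0 x y * f₀ x y)
              * (py η0 x y - (py ξ0 x y * f₀ x y + ξ0 x y * py f₀ x y)))) * f₀ x y
          + (η0 x y - ξ0 x y * f₀ x y) ^ 2
            * (ξ0 x y * f₁ x y + ξ1 x y * f₀ x y - η1 x y) * py f₀ x y
          - (η0 x y - ξ0 x y * f₀ x y) ^ 2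
            * (py η0 x y - (py ξ0 x y * f₀ x y + ξ0 x y * py f₀ x y)) * f₁ x y
          + (η0 x y - ξ0 x y * f₀ x y) ^ 3 * py f₁ x y = 0 from by
        linear_combination (-(η0 x y - ξ0 x y * f₀ x y) ^ 2) * hdet1 x y
          - (2 * (ξ0 x y * f₁ x y + ξ1 x y * f₀ x y - η1 x y)
              * (η0 x y - ξ0 x y * f₀ x y)) * hdet0 x y,
      zero_div]
end

section
/- Let f₀, f₁, μ₀, μ₁, φ₀, φ₁ : ℝ³ → ℝ be smooth functions of (x, y, p), and suppose that for all (x, y, p, q) ∈ ℝ⁴: μ₀(x,y,p) (q − f₀(x,y,p)) = φ₀_x + p φ₀_y + q φ₀_p (evaluated at (x,y,p)), and μ₁(x,y,p) (q − f₀(x,y,p)) − μ₀(x,y,p) f₁(x,y,p) = φ₁_x + p φ₁_y + q φ₁_p. Then for all (x, y, p) ∈ ℝ³ the following four equations hold: (1) p μ₀_yp + μ₀_xp + 2 μ₀_y + (μ₀ f₀)_pp = 0; (2) p² μ₀_yy + 2p μ₀_xy + μ₀_xx + p (μ₀ f₀)_yp + (μ₀ f₀)_xp − (μ₀ f₀)_y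 = 0; (3) p μ₁_yp + μ₁_xp + 2 μ₁_y + (μ₁ f₀)_pp + (μ₀ f₁)_pp = 0; (4) p² μ₁_yy + 2p μ₁_xy + μ₁_xx + p (μ₁ f₀)_yp + (μ₁ f₀)_xp − (μ₁ f₀)_y − (μ₀ f₁)_y + p (μ₀ f₁)_yp + (μ₀ f₁)_xp = 0. -/
/-- Partial derivative with respect to the first variable `x`. -/
noncomputable def dX (f : ℝ → ℝ → ℝ → ℝ) : ℝ → ℝ → ℝ → ℝ :=
  fun x y p => deriv (fun t => f t y p) x

/-- Partial derivative with respect to the second variable `y`. -/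
noncomputable def dY (f : ℝ → ℝ → ℝ → ℝ) : ℝ → ℝ → ℝ → ℝ :=
  fun x y p => deriv (fun t => f x t p) y

/-- Partial derivative with respect to the third variable `p` (the jet variable `y'`). -/
noncomputable def dP (f : ℝ → ℝ → ℝ → ℝ) : ℝ → ℝ → ℝ → ℝ :=
  fun x y p => deriv (fun t => f x y t) p

namespace AIFAux

/-- Uncurried version of a function of three real variables. -/
def U (f : ℝ → ℝ → ℝ → ℝ) : ℝ × ℝ × ℝ → ℝ := fun v => f v.1 v.2.1 v.2.2

theorem fext₃ {f g : ℝ → ℝ → ℝ → ℝ} (h : ∀ x y p, f x y p = g x y p) : f = g :=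
  funext fun x => funext fun y => funext fun p => h x y p

theorem cfun₃ {f g : ℝ → ℝ → ℝ → ℝ} (h : f = g) (x y p : ℝ) : f x y p = g x y p := by
  rw [h]

variable {f g A B P Q R : ℝ → ℝ → ℝ → ℝ}

theorem hasDerivAt_X (hf : ContDiff ℝ (⊤ : ℕ∞) (U f)) (x y p : ℝ) :
    HasDerivAt (fun t => f t y p) (fderiv ℝ (U f) (x, y, p) (1, 0, 0)) x := by
  have h := (hf.differentiable (by simp) (x, y, p)).hasFDerivAt
  have hl : HasDerivAt (fun t : ℝ => ((t, y, p) : ℝ × ℝ × ℝ)) ((1 : ℝ), (0 : ℝ), (0 : ℝ)) x :=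
    HasDerivAt.prodMk (hasDerivAt_id x) (HasDerivAt.prodMk (hasDerivAt_const x y) (hasDerivAt_const x p))
  exact h.comp_hasDerivAt x hl

theorem hasDerivAt_Y (hf : ContDiff ℝ (⊤ : ℕ∞) (U f)) (x y p : ℝ) :
    HasDerivAt (fun t => f x t p) (fderiv ℝ (U f) (x, y, p) (0, 1, 0)) y := by
  have h := (hf.differentiable (by simp) (x, y, p)).hasFDerivAt
  have hl : HasDerivAt (fun t : ℝ => ((x, t, p) : ℝ × ℝ × ℝ)) ((0 : ℝ), (1 : ℝ), (0 : ℝ)) y :=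
    HasDerivAt.prodMk (hasDerivAt_const y x) (HasDerivAt.prodMk (hasDerivAt_id y) (hasDerivAt_const y p))
  exact h.comp_hasDerivAt y hl

theorem hasDerivAt_P (hf : ContDiff ℝ (⊤ : ℕ∞) (U f)) (x y p : ℝ) :
    HasDerivAt (fun t => f x y t) (fderiv ℝ (U f) (x, y, p) (0, 0, 1)) p := by
  have h := (hf.differentiable (by simp) (x, y, p)).hasFDerivAt
  have hl : HasDerivAt (fun t : ℝ => ((x, y, t) : ℝ × ℝ × ℝ)) ((0 : ℝ), (0 : ℝ), (1 : ℝ)) p :=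
    HasDerivAt.prodMk (hasDerivAt_const p x) (HasDerivAt.prodMk (hasDerivAt_const p y) (hasDerivAt_id p))
  exact h.comp_hasDerivAt p hl

theorem dX_eq (hf : ContDiff ℝ (⊤ : ℕ∞) (U f)) (x y p : ℝ) :
    dX f x y p = fderiv ℝ (U f) (x, y, p) (1, 0, 0) := (hasDerivAt_X hf x y p).deriv

theorem dY_eq (hf : ContDiff ℝ (⊤ : ℕ∞) (U f)) (x y p : ℝ) :
    dY f x y p = fderiv ℝ (U f) (x, y, p) (0, 1, 0) := (hasDerivAt_Y hf x y p).deriv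

theorem dP_eq (hf : ContDiff ℝ (⊤ : ℕ∞) (U f)) (x y p : ℝ) :
    dP f x y p = fderiv ℝ (U f) (x, y, p) (0, 0, 1) := (hasDerivAt_P hf x y p).deriv

theorem U_dX (hf : ContDiff ℝ (⊤ : ℕ∞) (U f)) :
    U (dX f) = fun v => fderiv ℝ (U f) v (1, 0, 0) :=
  funext fun v => dX_eq hf v.1 v.2.1 v.2.2

theorem U_dY (hf : ContDiff ℝ (⊤ : ℕ∞) (U f)) :
    U (dY f) = fun v => fderiv ℝ (U f) v (0, 1, 0) :=
  funext fun v => dY_eq hf v.1 v.2.1 v.2.2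

theorem U_dP (hf : ContDiff ℝ (⊤ : ℕ∞) (U f)) :
    U (dP f) = fun v => fderiv ℝ (U f) v (0, 0, 1) :=
  funext fun v => dP_eq hf v.1 v.2.1 v.2.2

theorem contDiff_applied (hf : ContDiff ℝ (⊤ : ℕ∞) (U f)) (u : ℝ × ℝ × ℝ) :
    ContDiff ℝ (⊤ : ℕ∞) (fun v => fderiv ℝ (U f) v u) :=
  (ContinuousLinearMap.apply ℝ ℝ u).contDiff.comp (hf.fderiv_right (by simp))

theorem contDiff_dX (hf : ContDiff ℝ (⊤ : ℕ∞) (U f)) : ContDiff ℝ (⊤ : ℕ∞) (U (dX f)) := by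
  rw [U_dX hf]; exact contDiff_applied hf _

theorem contDiff_dY (hf : ContDiff ℝ (⊤ : ℕ∞) (U f)) : ContDiff ℝ (⊤ : ℕ∞) (U (dY f)) := by
  rw [U_dY hf]; exact contDiff_applied hf _

theorem contDiff_dP (hf : ContDiff ℝ (⊤ : ℕ∞) (U f)) : ContDiff ℝ (⊤ : ℕ∞) (U (dP f)) := by
  rw [U_dP hf]; exact contDiff_applied hf _

theorem fderiv_applied (hf : ContDiff ℝ (⊤ : ℕ∞) (U f)) (z u w : ℝ × ℝ × ℝ) :
    fderiv ℝ (fun v => fderiv ℝ (U f) v u) z w = fderiv ℝ (fderiv ℝ (U f)) z w u := by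
  have hd : DifferentiableAt ℝ (fderiv ℝ (U f)) z :=
    ((hf.fderiv_right (m := (⊤ : ℕ∞)) (by simp)).differentiable (by simp)).differentiableAt
  have h := ((ContinuousLinearMap.apply ℝ ℝ u).hasFDerivAt.comp z hd.hasFDerivAt).fderiv
  have he : (fun v => fderiv ℝ (U f) v u)
      = (ContinuousLinearMap.apply ℝ ℝ u) ∘ (fderiv ℝ (U f)) := rfl
  rw [he, h]
  rfl

theorem comm_core (hf : ContDiff ℝ (⊤ : ℕ∞) (U f)) (z u w : ℝ × ℝ × ℝ) :
    fderiv ℝ (fun v => fderiv ℝ (U f) v u) z w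
      = fderiv ℝ (fun v => fderiv ℝ (U f) v w) z u := by
  rw [fderiv_applied hf, fderiv_applied hf]
  exact hf.contDiffAt.isSymmSndFDerivAt (by rw [minSmoothness_of_isRCLikeNormedField]; exact (WithTop.coe_le_coe.mpr (le_top : (2 : ℕ∞) ≤ ⊤) : ((2 : ℕ∞) : WithTop ℕ∞) ≤ _)) w u

theorem comm_XY (hf : ContDiff ℝ (⊤ : ℕ∞) (U f)) : dY (dX f) = dX (dY f) := by
  apply fext₃; intro x y p
  rw [dY_eq (contDiff_dX hf), dX_eq (contDiff_dY hf), U_dX hf, U_dY hf]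
  exact comm_core hf _ _ _

theorem comm_XP (hf : ContDiff ℝ (⊤ : ℕ∞) (U f)) : dP (dX f) = dX (dP f) := by
  apply fext₃; intro x y p
  rw [dP_eq (contDiff_dX hf), dX_eq (contDiff_dP hf), U_dX hf, U_dP hf]
  exact comm_core hf _ _ _

theorem comm_YP (hf : ContDiff ℝ (⊤ : ℕ∞) (U f)) : dP (dY f) = dY (dP f) := by
  apply fext₃; intro x y p
  rw [dP_eq (contDiff_dY hf), dY_eq (contDiff_dP hf), U_dY hf, U_dP hf]
  exact comm_core hf _ _ _

theorem hasDerivAt_dX (hf : ContDiff ℝ (⊤ : ℕ∞) (U f)) (x y p : ℝ) :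
    HasDerivAt (fun t => f t y p) (dX f x y p) x :=
  (hasDerivAt_X hf x y p).differentiableAt.hasDerivAt

theorem hasDerivAt_dY (hf : ContDiff ℝ (⊤ : ℕ∞) (U f)) (x y p : ℝ) :
    HasDerivAt (fun t => f x t p) (dY f x y p) y :=
  (hasDerivAt_Y hf x y p).differentiableAt.hasDerivAt

theorem hasDerivAt_dP (hf : ContDiff ℝ (⊤ : ℕ∞) (U f)) (x y p : ℝ) :
    HasDerivAt (fun t => f x y t) (dP f x y p) p :=
  (hasDerivAt_P hf x y p).differentiableAt.hasDerivAt

theorem dP_addF (hf : ContDiff ℝ (⊤ : ℕ∞) (U f)) (hg : ContDiff ℝ (⊤ : ℕ∞) (U g)) :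
    dP (fun a b c => f a b c + g a b c)
      = fun x y p => dP f x y p + dP g x y p := by
  apply fext₃; intro x y p
  exact ((hasDerivAt_dP hf x y p).add (hasDerivAt_dP hg x y p)).deriv

theorem dY_addF (hf : ContDiff ℝ (⊤ : ℕ∞) (U f)) (hg : ContDiff ℝ (⊤ : ℕ∞) (U g)) :
    dY (fun a b c => f a b c + g a b c)
      = fun x y p => dY f x y p + dY g x y p := by
  apply fext₃; intro x y p
  exact ((hasDerivAt_dY hf x y p).add (hasDerivAt_dY hg x y p)).deriv

theorem dX_addF (hf : ContDiff ℝ (⊤ : ℕ∞) (U f)) (hg : ContDiff ℝ (⊤ : ℕ∞) (U g)) :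
    dX (fun a b c => f a b c + g a b c)
      = fun x y p => dX f x y p + dX g x y p := by
  apply fext₃; intro x y p
  exact ((hasDerivAt_dX hf x y p).add (hasDerivAt_dX hg x y p)).deriv

theorem dP_shape1F (hA : ContDiff ℝ (⊤ : ℕ∞) (U A)) (hB : ContDiff ℝ (⊤ : ℕ∞) (U B)) :
    dP (fun a b c => -(A a b c + c * B a b c))
      = fun x y p => -(dP A x y p + (B x y p + p * dP B x y p)) := by
  apply fext₃; intro x y p
  have h : HasDerivAt (fun t => -(A x y t + t * B x y t))
      (-(dP A x y p + (1 * B x y p + p * dP B x y p))) p :=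
    ((hasDerivAt_dP hA x y p).add ((hasDerivAt_id p).mul (hasDerivAt_dP hB x y p))).neg
  have h2 := h.deriv
  simp only [one_mul] at h2
  exact h2

theorem dY_shape1F (hA : ContDiff ℝ (⊤ : ℕ∞) (U A)) (hB : ContDiff ℝ (⊤ : ℕ∞) (U B)) :
    dY (fun a b c => -(A a b c + c * B a b c))
      = fun x y p => -(dY A x y p + p * dY B x y p) := by
  apply fext₃; intro x y p
  have h : HasDerivAt (fun t => -(A x t p + p * B x t p))
      (-(dY A x y p + p * dY B x y p)) y :=
    ((hasDerivAt_dY hA x y p).add ((hasDerivAt_dY hB x y p).const_mul p)).neg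
  exact h.deriv

theorem dX_shape1F (hA : ContDiff ℝ (⊤ : ℕ∞) (U A)) (hB : ContDiff ℝ (⊤ : ℕ∞) (U B)) :
    dX (fun a b c => -(A a b c + c * B a b c))
      = fun x y p => -(dX A x y p + p * dX B x y p) := by
  apply fext₃; intro x y p
  have h : HasDerivAt (fun t => -(A t y p + p * B t y p))
      (-(dX A x y p + p * dX B x y p)) x :=
    ((hasDerivAt_dX hA x y p).add ((hasDerivAt_dX hB x y p).const_mul p)).neg
  exact h.deriv

theorem dP_shape2F (hP : ContDiff ℝ (⊤ : ℕ∞) (U P)) (hQ : ContDiff ℝ (⊤ : ℕ∞) (U Q))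
    (hR : ContDiff ℝ (⊤ : ℕ∞) (U R)) :
    dP (fun a b c => -(P a b c + (Q a b c + c * R a b c)))
      = fun x y p => -(dP P x y p + (dP Q x y p + (R x y p + p * dP R x y p))) := by
  apply fext₃; intro x y p
  have h : HasDerivAt (fun t => -(P x y t + (Q x y t + t * R x y t)))
      (-(dP P x y p + (dP Q x y p + (1 * R x y p + p * dP R x y p)))) p :=
    ((hasDerivAt_dP hP x y p).add ((hasDerivAt_dP hQ x y p).add
      ((hasDerivAt_id p).mul (hasDerivAt_dP hR x y p)))).neg
  have h2 := h.deriv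
  simp only [one_mul] at h2
  exact h2

end AIFAux

open AIFAux in
/-- Determining equations for the components `μ₀, μ₁` of an approximate integrating
factor `μ = μ₀ + ε μ₁` of the perturbed second-order ODE `y'' = f₀ + ε f₁`,
with `y'` and `y''` treated as independent jet variables `p, q`. -/
theorem determining_equations_approximate_integrating_factor_second_order
    (f₀ f₁ μ₀ μ₁ φ₀ φ₁ : ℝ → ℝ → ℝ → ℝ)
    (hf₀ : ContDiff ℝ (⊤ : ℕ∞) fun v : ℝ × ℝ × ℝ => f₀ v.1 v.2.1 v.2.2)
    (hf₁ : ContDiff ℝ (⊤ : ℕ∞) fun v : ℝ × ℝ × ℝ => f₁ v.1 v.2.1 v.2.2)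
    (hμ₀ : ContDiff ℝ (⊤ : ℕ∞) fun v : ℝ × ℝ × ℝ => μ₀ v.1 v.2.1 v.2.2)
    (hμ₁ : ContDiff ℝ (⊤ : ℕ∞) fun v : ℝ × ℝ × ℝ => μ₁ v.1 v.2.1 v.2.2)
    (hφ₀ : ContDiff ℝ (⊤ : ℕ∞) fun v : ℝ × ℝ × ℝ => φ₀ v.1 v.2.1 v.2.2)
    (hφ₁ : ContDiff ℝ (⊤ : ℕ∞) fun v : ℝ × ℝ × ℝ => φ₁ v.1 v.2.1 v.2.2)
    (h0 : ∀ x y p q : ℝ,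
      μ₀ x y p * (q - f₀ x y p)
        = dX φ₀ x y p + p * dY φ₀ x y p + q * dP φ₀ x y p)
    (h1 : ∀ x y p q : ℝ,
      μ₁ x y p * (q - f₀ x y p) - μ₀ x y p * f₁ x y p
        = dX φ₁ x y p + p * dY φ₁ x y p + q * dP φ₁ x y p) :
    ∀ x y p : ℝ,
      (p * dP (dY μ₀) x y p + dP (dX μ₀) x y p + 2 * dY μ₀ x y p
        + dP (dP (fun a b c => μ₀ a b c * f₀ a b c)) x y p = 0) ∧
      (p ^ 2 * dY (dY μ₀) x y p + 2 * p * dY (dX μ₀) x y p + dX (dX μ₀) x y p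
        + p * dP (dY (fun a b c => μ₀ a b c * f₀ a b c)) x y p
        + dP (dX (fun a b c => μ₀ a b c * f₀ a b c)) x y p
        - dY (fun a b c => μ₀ a b c * f₀ a b c) x y p = 0) ∧
      (p * dP (dY μ₁) x y p + dP (dX μ₁) x y p + 2 * dY μ₁ x y p
        + dP (dP (fun a b c => μ₁ a b c * f₀ a b c)) x y p
        + dP (dP (fun a b c => μ₀ a b c * f₁ a b c)) x y p = 0) ∧
      (p ^ 2 * dY (dY μ₁) x y p + 2 * p * dY (dX μ₁) x y p + dX (dX μ₁) x y p
        + p * dP (dY (fun a b c => μ₁ a b c * f₀ a b c)) x y p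
        + dP (dX (fun a b c => μ₁ a b c * f₀ a b c)) x y p
        - dY (fun a b c => μ₁ a b c * f₀ a b c) x y p
        - dY (fun a b c => μ₀ a b c * f₁ a b c) x y p
        + p * dP (dY (fun a b c => μ₀ a b c * f₁ a b c)) x y p
        + dP (dX (fun a b c => μ₀ a b c * f₁ a b c)) x y p = 0) := by
  have hφ₀' : ContDiff ℝ (⊤ : ℕ∞) (U φ₀) := hφ₀
  have hφ₁' : ContDiff ℝ (⊤ : ℕ∞) (U φ₁) := hφ₁
  have hA₀ : ContDiff ℝ (⊤ : ℕ∞) (U (dX φ₀)) := contDiff_dX hφ₀'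
  have hB₀ : ContDiff ℝ (⊤ : ℕ∞) (U (dY φ₀)) := contDiff_dY hφ₀'
  have hA₁ : ContDiff ℝ (⊤ : ℕ∞) (U (dX φ₁)) := contDiff_dX hφ₁'
  have hB₁ : ContDiff ℝ (⊤ : ℕ∞) (U (dY φ₁)) := contDiff_dY hφ₁'
  have hh₁ : ContDiff ℝ (⊤ : ℕ∞) (U (fun a b c => μ₁ a b c * f₀ a b c)) := hμ₁.mul hf₀
  have hh₂ : ContDiff ℝ (⊤ : ℕ∞) (U (fun a b c => μ₀ a b c * f₁ a b c)) := hμ₀.mul hf₁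
  have e1 : μ₀ = dP φ₀ := by
    apply fext₃; intro x y p
    have a := h0 x y p (f₀ x y p + 1)
    have b := h0 x y p (f₀ x y p)
    linear_combination a - b
  have e2 : (fun a b c => μ₀ a b c * f₀ a b c)
      = fun a b c => -(dX φ₀ a b c + c * dY φ₀ a b c) := by
    apply fext₃; intro x y p
    have b := h0 x y p 0
    linear_combination -b
  have e3 : μ₁ = dP φ₁ := by
    apply fext₃; intro x y p
    have a := h1 x y p (f₀ x y p + 1)
    have b := h1 x y p (f₀ x y p)
    linear_combination a - b
  have e4 : (fun a b c => μ₁ a b c * f₀ a b c + μ₀ a b c * f₁ a b c)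
      = fun a b c => -(dX φ₁ a b c + c * dY φ₁ a b c) := by
    apply fext₃; intro x y p
    have b := h1 x y p 0
    linear_combination -b
  intro x y p
  refine ⟨?_, ?_, ?_, ?_⟩
  · -- equation (1)
    rw [e2, e1, ← comm_YP hφ₀', ← comm_XP hφ₀',
      dP_shape1F hA₀ hB₀, dP_shape2F (contDiff_dP hA₀) hB₀ (contDiff_dP hB₀)]
    beta_reduce
    ring
  · -- equation (2)
    rw [e2, e1, ← comm_YP hφ₀', ← comm_XP hφ₀',
      ← comm_YP hB₀, ← comm_YP hA₀, ← comm_XP hA₀,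
      dY_shape1F hA₀ hB₀, dX_shape1F hA₀ hB₀,
      dP_shape1F (contDiff_dY hA₀) (contDiff_dY hB₀),
      dP_shape1F (contDiff_dX hA₀) (contDiff_dX hB₀),
      comm_XY hφ₀']
    beta_reduce
    ring
  · -- equation (3)
    have E : (fun a b c => dP (dP (fun a b c => μ₁ a b c * f₀ a b c)) a b c
          + dP (dP (fun a b c => μ₀ a b c * f₁ a b c)) a b c)
        = fun x y p => -(dP (dP (dX φ₁)) x y p + (dP (dY φ₁) x y p
            + (dP (dY φ₁) x y p + p * dP (dP (dY φ₁)) x y p))) := by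
      rw [← dP_addF (contDiff_dP hh₁) (contDiff_dP hh₂)]
      beta_reduce
      rw [← dP_addF hh₁ hh₂]
      beta_reduce
      rw [e4, dP_shape1F hA₁ hB₁, dP_shape2F (contDiff_dP hA₁) hB₁ (contDiff_dP hB₁)]
    have e := cfun₃ E x y p
    beta_reduce at e
    rw [e3] at e ⊢
    rw [← comm_YP hφ₁', ← comm_XP hφ₁']
    linear_combination e
  · -- equation (4)
    have EY : (fun a b c => dY (fun a b c => μ₁ a b c * f₀ a b c) a b c
          + dY (fun a b c => μ₀ a b c * f₁ a b c) a b c)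
        = fun x y p => -(dY (dX φ₁) x y p + p * dY (dY φ₁) x y p) := by
      rw [← dY_addF hh₁ hh₂]
      beta_reduce
      rw [e4, dY_shape1F hA₁ hB₁]
    have EX : (fun a b c => dX (fun a b c => μ₁ a b c * f₀ a b c) a b c
          + dX (fun a b c => μ₀ a b c * f₁ a b c) a b c)
        = fun x y p => -(dX (dX φ₁) x y p + p * dX (dY φ₁) x y p) := by
      rw [← dX_addF hh₁ hh₂]
      beta_reduce
      rw [e4, dX_shape1F hA₁ hB₁]
    have EPY : (fun a b c => dP (dY (fun a b c => μ₁ a b c * f₀ a b c)) a b c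
          + dP (dY (fun a b c => μ₀ a b c * f₁ a b c)) a b c)
        = fun x y p => -(dP (dY (dX φ₁)) x y p + (dY (dY φ₁) x y p
            + p * dP (dY (dY φ₁)) x y p)) := by
      rw [← dP_addF (contDiff_dY hh₁) (contDiff_dY hh₂)]
      beta_reduce
      rw [EY, dP_shape1F (contDiff_dY hA₁) (contDiff_dY hB₁)]
    have EPX : (fun a b c => dP (dX (fun a b c => μ₁ a b c * f₀ a b c)) a b c
          + dP (dX (fun a b c => μ₀ a b c * f₁ a b c)) a b c)
        = fun x y p => -(dP (dX (dX φ₁)) x y p + (dX (dY φ₁) x y p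
            + p * dP (dX (dY φ₁)) x y p)) := by
      rw [← dP_addF (contDiff_dX hh₁) (contDiff_dX hh₂)]
      beta_reduce
      rw [EX, dP_shape1F (contDiff_dX hA₁) (contDiff_dX hB₁)]
    have eY := cfun₃ EY x y p
    have ePY := cfun₃ EPY x y p
    have ePX := cfun₃ EPX x y p
    beta_reduce at eY ePY ePX
    rw [e3] at eY ePY ePX ⊢
    rw [← comm_YP hφ₁', ← comm_XP hφ₁',
      ← comm_YP hB₁, ← comm_YP hA₁, ← comm_XP hA₁, comm_XY hφ₁']
    rw [comm_XY hφ₁'] at eY ePY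
    linear_combination p * ePY + ePX - eY
end

section
/- Let ε ∈ ℝ and let y : ℝ → ℝ be twice differentiable with y''(x) = −y(x) + ε (x + 1 + y(x)²) for all x ∈ ℝ. Define E(x) = y'(x)² + y(x)² + ε ( y'(x)² − 2 y'(x) + y(x)² − (2x + 2) y(x) − (2/3) y(x)³ ). Then for all x ∈ ℝ: E'(x) = 2 ε² (y'(x) − 1)(x + 1 + y(x)²). -/
/-- Along any solution of `y'' = −y + ε(x + 1 + y²)`, the approximate first integral
`E = y'² + y² + ε(y'² − 2y' + y² − (2x+2)y − (2/3)y³)` has derivative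
`2ε²(y' − 1)(x + 1 + y²)`. -/
theorem approximate_first_integral_of_reduced_boussinesq_ODE
    (ε : ℝ) (y : ℝ → ℝ)
    (h0 : Differentiable ℝ y)
    (h1 : Differentiable ℝ (deriv y))
    (hode : ∀ x : ℝ, deriv (deriv y) x = -y x + ε * (x + 1 + (y x) ^ 2))
    (E : ℝ → ℝ)
    (hE : E = fun x => (deriv y x) ^ 2 + (y x) ^ 2
      + ε * ((deriv y x) ^ 2 - 2 * deriv y x + (y x) ^ 2
        - (2 * x + 2) * y x - 2 / 3 * (y x) ^ 3)) :
    ∀ x : ℝ,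
      deriv E x = 2 * ε ^ 2 * (deriv y x - 1) * (x + 1 + (y x) ^ 2) := by
  intro x
  have hy : HasDerivAt y (deriv y x) x := (h0 x).hasDerivAt
  have hv : HasDerivAt (deriv y) (deriv (deriv y) x) x := (h1 x).hasDerivAt
  have hlin : HasDerivAt (fun t : ℝ => 2 * t + 2) 2 x := by
    simpa using ((hasDerivAt_id x).const_mul 2).add_const 2
  have hEx : HasDerivAt E
      ((2 * deriv y x ^ 1 * deriv (deriv y) x + 2 * y x ^ 1 * deriv y x) +
        ε * ((2 * deriv y x ^ 1 * deriv (deriv y) x - 2 * deriv (deriv y) x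
          + 2 * y x ^ 1 * deriv y x)
          - (2 * y x + (2 * x + 2) * deriv y x)
          - 2 / 3 * (3 * y x ^ 2 * deriv y x))) x := by
    rw [hE]
    exact ((hv.pow 2).add (hy.pow 2)).add
      (HasDerivAt.const_mul ε
        (((((hv.pow 2).sub (HasDerivAt.const_mul 2 hv)).add (hy.pow 2)).sub (hlin.mul hy)).sub
          (HasDerivAt.const_mul (2 / 3) (hy.pow 3))))
  rw [hEx.deriv, hode x]
  ring
end

section
/- Define, for ε ∈ ℝ, the function y_ε : ℝ → ℝ by y_ε(x) = sin x + cos x + ε (16 − sin 2x)/3. Then there exists a constant C > 0 such that for all ε ∈ [0, 1] and all x ∈ ℝ: | y_ε⁗(x) + y_ε''(x) − ε ( 2 y_ε(x) y_ε''(x) + 2 y_ε'(x)² ) | ≤ C ε². -/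
/-- The approximate solution `y_ε(x) = sin x + cos x + ε (16 − sin 2x)/3` of the
perturbed Boussinesq ODE. -/
noncomputable def yApprox (ε : ℝ) : ℝ → ℝ :=
  fun x => Real.sin x + Real.cos x + ε * (16 - Real.sin (2 * x)) / 3

/-!
The trigonometric polynomials spanned by `1, sin x, cos x, sin 2x, cos 2x` are closed under
differentiation, so every derivative of `y_ε` is explicit. Since `2yy'' + 2(y')² = (y²)''` and
`(sin x + cos x)² = 1 + sin 2x`, the `O(ε)` part of the residual is `-4 sin 2x - (1 + sin 2x)'' = 0`;
what remains is `ε²` times a trigonometric polynomial bounded uniformly for `ε ∈ [0, 1]`.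
-/

open Real

noncomputable def trigPoly2 (a b c d e : ℝ) (x : ℝ) : ℝ :=
  a * sin x + b * cos x + c * sin (2 * x) + d * cos (2 * x) + e

theorem hasDerivAt_trigPoly2 (a b c d e x : ℝ) :
    HasDerivAt (trigPoly2 a b c d e) (trigPoly2 (-b) a (-2 * d) (2 * c) 0 x) x := by
  have h2 : HasDerivAt (fun x : ℝ => 2 * x) 2 x := by
    simpa using (hasDerivAt_id x).const_mul (2 : ℝ)
  have := (((((hasDerivAt_sin x).const_mul a).add ((hasDerivAt_cos x).const_mul b)).add
    (((hasDerivAt_sin (2 * x)).comp x h2).const_mul c)).add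
    (((hasDerivAt_cos (2 * x)).comp x h2).const_mul d)).add_const e
  exact this.congr_deriv (by simp only [trigPoly2]; ring)

theorem deriv_trigPoly2 (a b c d e : ℝ) :
    deriv (trigPoly2 a b c d e) = trigPoly2 (-b) a (-2 * d) (2 * c) 0 :=
  funext fun x => (hasDerivAt_trigPoly2 a b c d e x).deriv

theorem yApprox_eq_trigPoly2 (ε : ℝ) :
    yApprox ε = trigPoly2 1 1 (-ε / 3) 0 (16 * ε / 3) := by
  ext x
  simp only [yApprox, trigPoly2]
  ring

noncomputable def boussinesqResidual (y : ℝ → ℝ) (ε x : ℝ) : ℝ :=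
  iteratedDeriv 4 y x + iteratedDeriv 2 y x
    - ε * (2 * y x * iteratedDeriv 2 y x + 2 * deriv y x ^ 2)

theorem boussinesqResidual_yApprox (ε x : ℝ) :
    boussinesqResidual (yApprox ε) ε x =
      -ε ^ 2 * (((sin x + cos x) * (10 * sin (2 * x) - 32)
          - 8 * (cos x - sin x) * cos (2 * x)) / 3
        + 8 * ε * ((16 - sin (2 * x)) * sin (2 * x) + cos (2 * x) ^ 2) / 9) := by
  simp only [boussinesqResidual, yApprox_eq_trigPoly2, iteratedDeriv_succ', iteratedDeriv_zero,
    deriv_trigPoly2, trigPoly2]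
  linear_combination (-4 * ε) * sin_two_mul x

theorem abs_residual_coeff_le {ε s c t u : ℝ} (hε : ε ∈ Set.Icc (0 : ℝ) 1)
    (hs : |s| ≤ 1) (hc : |c| ≤ 1) (ht : |t| ≤ 1) (hu : |u| ≤ 1) :
    |((s + c) * (10 * t - 32) - 8 * (c - s) * u) / 3 + 8 * ε * ((16 - t) * t + u ^ 2) / 9|
      ≤ 50 := by
  -- termwise bounds give `(2 * 42 + 8 * 2) / 3 + 8 * 18 / 9 = 148 / 3`
  obtain ⟨hε0, hε1⟩ := hε
  rw [abs_le] at hs hc ht hu ⊢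
  constructor <;> nlinarith [mul_nonneg hε0 hε0, sq_nonneg u, sq_nonneg t]

/-- The function `y_ε` solves the perturbed Boussinesq ODE
`y⁗ + y'' − ε(2yy'' + 2(y')²) = 0` up to a residual that is uniformly `O(ε²)`. -/
theorem approximate_solution_of_perturbed_boussinesq_ODE :
    ∃ C : ℝ, 0 < C ∧ ∀ ε ∈ Set.Icc (0 : ℝ) 1, ∀ x : ℝ,
      |iteratedDeriv 4 (yApprox ε) x + iteratedDeriv 2 (yApprox ε) x
        - ε * (2 * yApprox ε x * iteratedDeriv 2 (yApprox ε) x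
          + 2 * (deriv (yApprox ε) x) ^ 2)| ≤ C * ε ^ 2 := by
  refine ⟨50, by norm_num, fun ε hε x => ?_⟩
  change |boussinesqResidual (yApprox ε) ε x| ≤ 50 * ε ^ 2
  rw [boussinesqResidual_yApprox, abs_mul, abs_neg, abs_of_nonneg (sq_nonneg ε), mul_comm]
  exact mul_le_mul_of_nonneg_right (abs_residual_coeff_le hε (abs_sin_le_one x)
    (abs_cos_le_one x) (abs_sin_le_one _) (abs_cos_le_one _)) (sq_nonneg ε)
end
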